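/- arXiv:2601.15237 — 3 statements merged into one kernel-verified Lean document; each statement's English description precedes it below -/
import Mathlib

section
/- Fix ω > 0, γ > 0, β > 0 and p with p_e < p ≤ 1/2, where p_e = 1/(e^{2ωβ} + 1) and λ = γ/(2p_e − 1) (a hotter initial probe). Then the function δ(t) = 1 − e^{λt} + 2t(p_e − p)(λ²/γ) e^{λt} satisfies 0 ≤ δ(t) ≤ 1 for all t ≥ 0. -/
/-- For a hotter initial probe (`p_e < p ≤ 1/2`), the normalized
sensitivity `δ(t) = 1 − e^{λt} + 2t(p_e − p)(λ²/γ) e^{λt}` satisfies `0 ≤ δ(t) ≤ 1`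
for all `t ≥ 0`. -/
theorem cold_probe_stmt_8 (ω γ β p : ℝ) (hω : 0 < ω) (hγ : 0 < γ) (hβ : 0 < β)
    (pe lam : ℝ)
    (hpe : pe = 1 / (Real.exp (2 * ω * β) + 1))
    (hphot : pe < p) (hphalf : p ≤ 1 / 2)
    (hlam : lam = γ / (2 * pe - 1)) :
    ∀ t : ℝ, 0 ≤ t →
      0 ≤ 1 - Real.exp (lam * t) + 2 * t * (pe - p) * (lam ^ 2 / γ) * Real.exp (lam * t) ∧
        1 - Real.exp (lam * t) + 2 * t * (pe - p) * (lam ^ 2 / γ) * Real.exp (lam * t) ≤ 1 := by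
  intro t ht
  have hE : 1 < Real.exp (2 * ω * β) := by
    nlinarith [Real.add_one_le_exp (2 * ω * β), mul_pos (mul_pos two_pos hω) hβ]
  have hpe2 : pe < 1 / 2 := by
    rw [hpe]
    rw [div_lt_div_iff₀ (by linarith) (by norm_num)]
    linarith
  set u : ℝ := 2 * pe - 1 with hu_def
  have hu : u < 0 := by simp only [hu_def]; linarith
  have hu2 : 0 < u ^ 2 := by nlinarith
  have hl2 : lam ^ 2 / γ = γ / u ^ 2 := by
    rw [hlam]
    field_simp
  set c : ℝ := 2 * (p - pe) * (γ / u ^ 2) with hc_def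
  have hc0 : 0 ≤ c := by
    have : 0 ≤ γ / u ^ 2 := by positivity
    have h1 : 0 ≤ p - pe := by linarith
    positivity
  have hsum : lam + c ≤ 0 := by
    have hune : u ≠ 0 := ne_of_lt hu
    have heq : lam + c = γ * (u + 2 * (p - pe)) / u ^ 2 := by
      rw [hc_def, hlam]
      field_simp
    rw [heq]
    apply div_nonpos_of_nonpos_of_nonneg _ (le_of_lt hu2)
    rw [hu_def]
    nlinarith
  have hexp : 0 < Real.exp (lam * t) := Real.exp_pos _
  have hkey : Real.exp (lam * t) * (1 + c * t) ≤ 1 := by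
    have h1 : 1 + c * t ≤ Real.exp (c * t) := by
      linarith [Real.add_one_le_exp (c * t)]
    have h2 : Real.exp (lam * t) * (1 + c * t) ≤ Real.exp (lam * t) * Real.exp (c * t) :=
      mul_le_mul_of_nonneg_left h1 hexp.le
    have h3 : Real.exp (lam * t) * Real.exp (c * t) = Real.exp ((lam + c) * t) := by
      rw [← Real.exp_add]; ring_nf
    have h4 : Real.exp ((lam + c) * t) ≤ 1 :=
      Real.exp_le_one_iff.mpr (mul_nonpos_of_nonpos_of_nonneg hsum ht)
    linarith
  rw [hl2]
  constructor
  · have : 2 * t * (pe - p) * (γ / u ^ 2) * Real.exp (lam * t)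
        = -(c * t) * Real.exp (lam * t) := by rw [hc_def]; ring
    rw [this]
    nlinarith
  · have hA : 2 * t * (pe - p) * (γ / u ^ 2) ≤ 0 := by
      have : 0 ≤ γ / u ^ 2 := by positivity
      nlinarith
    nlinarith
end

section
/- Fix ω > 0, γ > 0, β > 0 and p with p_e ≤ p ≤ 1/2, where p_e = 1/(e^{2ωβ} + 1) and λ = γ/(2p_e − 1). With δ(t) = 1 − e^{λt} + 2t(p_e − p)(λ²/γ) e^{λt}, a = (p_e − p)²/(p_e(1 − p_e)), b = (p_e − p)(2p_e − 1)/(p_e(1 − p_e)), and α(t) = 1 − a e^{2λt} + b e^{λt}, one has δ(t)² ≤ α(t) for all t ≥ 0. Hence for a hotter (or thermal) initial probe, the transient quantum Fisher information ratio r(t) = δ(t)²/α(t) never exceeds 1: the transient precision never surpasses the steady-state precision. -/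
/-- `u² ≤ e^u` for `u ≥ 0`. -/
lemma sq_le_exp_of_nonneg (u : ℝ) (hu : 0 ≤ u) : u ^ 2 ≤ Real.exp u := by
  have h1 : 1 + u / 4 ≤ Real.exp (u / 4) := by linarith [Real.add_one_le_exp (u / 4)]
  have h1' : (0:ℝ) ≤ 1 + u / 4 := by linarith
  have hexp : Real.exp u = (Real.exp (u / 4)) ^ 4 := by
    rw [← Real.exp_nat_mul]; congr 1; push_cast; ring
  have h4 : (1 + u / 4) ^ 4 ≤ (Real.exp (u / 4)) ^ 4 := pow_le_pow_left₀ h1' h1 4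
  nlinarith [sq_nonneg (u / 4 - 1), sq_nonneg (1 + u / 4)]

set_option maxHeartbeats 1000000 in
/-- For a hotter (or thermal) initial probe (`p_e ≤ p ≤ 1/2`),
one has `δ(t)² ≤ α(t)` for all `t ≥ 0`: the transient quantum Fisher information
ratio `r(t) = δ(t)²/α(t)` never exceeds `1`, so the transient precision never
surpasses the steady-state precision. -/
theorem cold_probe_stmt_10 (ω γ β p : ℝ) (hω : 0 < ω) (hγ : 0 < γ) (hβ : 0 < β)
    (pe lam a b : ℝ)
    (hpe : pe = 1 / (Real.exp (2 * ω * β) + 1))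
    (hphot : pe ≤ p) (hphalf : p ≤ 1 / 2)
    (hlam : lam = γ / (2 * pe - 1))
    (ha : a = (pe - p) ^ 2 / (pe * (1 - pe)))
    (hb : b = (pe - p) * (2 * pe - 1) / (pe * (1 - pe))) :
    ∀ t : ℝ, 0 ≤ t →
      (1 - Real.exp (lam * t) + 2 * t * (pe - p) * (lam ^ 2 / γ) * Real.exp (lam * t)) ^ 2 ≤
        1 - a * Real.exp (2 * lam * t) + b * Real.exp (lam * t) := by
  intro t ht
  -- basic facts about pe
  have hexp1 : 1 < Real.exp (2 * ω * β) := by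
    calc (1:ℝ) = Real.exp 0 := Real.exp_zero.symm
      _ < Real.exp (2 * ω * β) := Real.exp_lt_exp.mpr (by positivity)
  have hpe0 : 0 < pe := by rw [hpe]; positivity
  have hpehalf : pe < 1 / 2 := by
    rw [hpe, div_lt_div_iff₀ (by positivity) (by norm_num)]
    linarith
  have hm : 0 < 1 - 2 * pe := by linarith
  have hm' : (2 * pe - 1) ≠ 0 := by intro h; linarith [hm]
  have hK : 0 < pe * (1 - pe) := by nlinarith
  have ha0 : 0 ≤ a := by rw [ha]; positivity
  have hba : a ≤ b := by
    rw [ha, hb, div_le_div_iff₀ hK hK]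
    have hkey : (pe - p) ^ 2 ≤ (pe - p) * (2 * pe - 1) := by
      nlinarith [mul_nonneg (show (0:ℝ) ≤ p - pe by linarith)
        (show (0:ℝ) ≤ (1 - 2 * pe) - (p - pe) by linarith)]
    exact mul_le_mul_of_nonneg_right hkey hK.le
  set s := lam * t with hs
  set E := Real.exp s with hE
  have hE0 : 0 < E := Real.exp_pos _
  have hlamneg : lam < 0 := by
    rw [hlam]; apply div_neg_of_pos_of_neg hγ; linarith
  have hsle : s ≤ 0 := mul_nonpos_of_nonpos_of_nonneg hlamneg.le ht
  have hE1 : E ≤ 1 := Real.exp_le_one_iff.mpr hsle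
  have h1E : 0 ≤ 1 - E := by linarith
  -- key bound s² E ≤ 1
  have hsE : s ^ 2 * E ≤ 1 := by
    have h := sq_le_exp_of_nonneg (-s) (by linarith)
    have hinv : Real.exp (-s) * E = 1 := by
      rw [hE, ← Real.exp_add]; simp
    nlinarith [Real.exp_pos (-s)]
  -- exp(2 lam t) = E²
  have hE2 : Real.exp (2 * lam * t) = E ^ 2 := by
    rw [hE, hs, ← Real.exp_nat_mul]; norm_num; ring_nf
  -- rewrite the perturbation term
  have hD : 2 * t * (pe - p) * (lam ^ 2 / γ) * E
      = (2 * (pe - p) / (2 * pe - 1)) * (s * E) := by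
    rw [hs, hlam]; field_simp
  set f := 2 * (pe - p) / (2 * pe - 1) with hf
  have hc0 : 0 ≤ p - pe := by linarith
  have hf' : f = 2 * (p - pe) / (1 - 2 * pe) := by
    rw [hf, div_eq_div_iff hm' hm.ne']; ring
  have hf0 : 0 ≤ f := by rw [hf']; exact div_nonneg (by linarith) hm.le
  have hf1 : f ≤ 1 := by rw [hf', div_le_one hm]; linarith
  set D := f * (s * E) with hDdef
  have hD0 : D ≤ 0 :=
    mul_nonpos_of_nonneg_of_nonpos hf0 (mul_nonpos_of_nonpos_of_nonneg hsle hE0.le)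
  have hD2 : D ^ 2 ≤ E := by
    have hnn : (0:ℝ) ≤ s ^ 2 * E * E := by positivity
    have hf2 : f ^ 2 ≤ 1 := by nlinarith
    calc D ^ 2 = f ^ 2 * (s ^ 2 * E * E) := by rw [hDdef]; ring
      _ ≤ 1 * (s ^ 2 * E * E) := mul_le_mul_of_nonneg_right hf2 hnn
      _ = (s ^ 2 * E) * E := by ring
      _ ≤ 1 * E := mul_le_mul_of_nonneg_right hsE hE0.le
      _ = E := one_mul E
  rw [hD, hE2]
  clear_value s E f D
  clear hpe hlam ha hb hf hf' hD hs hE hsE hE2 hexp1 hf0 hf1 hsle hc0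
  nlinarith [mul_nonneg h1E (neg_nonneg.mpr hD0), mul_nonneg (sub_nonneg.mpr hba) hE0.le,
    mul_nonneg (mul_nonneg ha0 h1E) hE0.le, mul_nonneg hE0.le h1E, hD2]
end

section
/- Fix ω > 0, γ > 0, β > 0 and p with 0 ≤ p < p_e, where p_e = 1/(e^{2ωβ} + 1) and λ = γ/(2p_e − 1) (a colder initial probe). With a = (p_e − p)²/(p_e(1 − p_e)) and b = (p_e − p)(2p_e − 1)/(p_e(1 − p_e)), the function α(t) = 1 − a e^{2λt} + b e^{λt} satisfies 0 < α(t) < 1 for all t > 0, and α(t) → 1 as t → +∞. -/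
/-!
With `s = e^{λt}` (so `0 < s < 1` for `t > 0`, as `λ < 0`) the function is the polynomial
`α = 1 - a s² + b s`. Since `a > 0` and `b < 0` for a colder probe, `α < 1`; and `α` is the
normalized variance `q (1 - q) / (p_e (1 - p_e))` of the population `q = p_e + s (p - p_e)`,
a convex combination of `p` and `p_e`, which lies in `(0, 1)`, so `α > 0`. As `s → 0`, `α → 1`.
-/

open Filter Topology Real

lemma one_div_exp_add_one_lt_half {x : ℝ} (hx : 0 < x) : 1 / (exp x + 1) < 1 / 2 := by
  have : 1 < exp x := one_lt_exp_iff.2 hx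
  rw [div_lt_div_iff₀ (by positivity) two_pos]
  linarith

section Polynomial

variable {pe p : ℝ}

lemma one_sub_mul_sq_add_mul_eq_div (hpe0 : pe ≠ 0) (hpe1 : pe ≠ 1) (s : ℝ) :
    1 - (pe - p) ^ 2 / (pe * (1 - pe)) * s ^ 2 + (pe - p) * (2 * pe - 1) / (pe * (1 - pe)) * s
      = (pe + s * (p - pe)) * (1 - (pe + s * (p - pe))) / (pe * (1 - pe)) := by
  field_simp [sub_ne_zero.2 hpe1.symm]
  ring

lemma one_sub_mul_sq_add_mul_pos (hp0 : 0 ≤ p) (hpcold : p < pe) (hpe1 : pe < 1) {s : ℝ}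
    (hs0 : 0 < s) (hs1 : s < 1) :
    0 < 1 - (pe - p) ^ 2 / (pe * (1 - pe)) * s ^ 2
      + (pe - p) * (2 * pe - 1) / (pe * (1 - pe)) * s := by
  have hpe0 : 0 < pe := hp0.trans_lt hpcold
  have hq0 : 0 < pe + s * (p - pe) := by nlinarith
  have hq1 : pe + s * (p - pe) < 1 := by nlinarith
  rw [one_sub_mul_sq_add_mul_eq_div hpe0.ne' hpe1.ne]
  have : 0 < 1 - pe := by linarith
  positivity

lemma one_sub_mul_sq_add_mul_lt_one (hpe0 : 0 < pe) (hpcold : p < pe) (hpe : pe < 1 / 2)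
    {s : ℝ} (hs0 : 0 < s) :
    1 - (pe - p) ^ 2 / (pe * (1 - pe)) * s ^ 2
      + (pe - p) * (2 * pe - 1) / (pe * (1 - pe)) * s < 1 := by
  have hD : 0 < pe * (1 - pe) := mul_pos hpe0 (by linarith)
  have ha : 0 < (pe - p) ^ 2 / (pe * (1 - pe)) * s ^ 2 := by
    have : 0 < pe - p := by linarith
    positivity
  have hb : (pe - p) * (2 * pe - 1) / (pe * (1 - pe)) * s < 0 :=
    mul_neg_of_neg_of_pos (div_neg_of_neg_of_pos
      (mul_neg_of_pos_of_neg (by linarith) (by linarith)) hD) hs0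
  linarith

end Polynomial

lemma tendsto_one_sub_mul_exp_two_mul_add_mul_exp {lam : ℝ} (hlam : lam < 0) (a b : ℝ) :
    Tendsto (fun t : ℝ => 1 - a * exp (2 * lam * t) + b * exp (lam * t)) atTop (𝓝 1) := by
  have hexp : ∀ {c : ℝ}, c < 0 → Tendsto (fun t : ℝ => exp (c * t)) atTop (𝓝 0) := fun hc =>
    tendsto_exp_atBot.comp ((tendsto_const_mul_atBot_of_neg hc).2 tendsto_id)
  simpa using ((tendsto_const_nhds (x := (1 : ℝ))).sub
    ((hexp (by linarith : 2 * lam < 0)).const_mul a)).add ((hexp hlam).const_mul b)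

/-- For a colder initial probe (`0 ≤ p < p_e`), the normalized
population variance `α(t) = 1 − a e^{2λt} + b e^{λt}` satisfies `0 < α(t) < 1` for
all `t > 0`, and `α(t) → 1` as `t → +∞`. -/
theorem cold_probe_stmt_11 (ω γ β p : ℝ) (hω : 0 < ω) (hγ : 0 < γ) (hβ : 0 < β)
    (pe lam a b : ℝ)
    (hpe : pe = 1 / (Real.exp (2 * ω * β) + 1))
    (hp0 : 0 ≤ p) (hpcold : p < pe)
    (hlam : lam = γ / (2 * pe - 1))
    (ha : a = (pe - p) ^ 2 / (pe * (1 - pe)))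
    (hb : b = (pe - p) * (2 * pe - 1) / (pe * (1 - pe))) :
    (∀ t : ℝ, 0 < t →
        0 < 1 - a * Real.exp (2 * lam * t) + b * Real.exp (lam * t) ∧
          1 - a * Real.exp (2 * lam * t) + b * Real.exp (lam * t) < 1) ∧
      Filter.Tendsto (fun t : ℝ => 1 - a * Real.exp (2 * lam * t) + b * Real.exp (lam * t))
        Filter.atTop (nhds 1) := by
  have hpe_half : pe < 1 / 2 := hpe ▸ one_div_exp_add_one_lt_half (by positivity)
  have hlam_neg : lam < 0 := hlam ▸ div_neg_of_pos_of_neg hγ (by linarith)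
  refine ⟨fun t ht => ?_, tendsto_one_sub_mul_exp_two_mul_add_mul_exp hlam_neg a b⟩
  have hsq : exp (2 * lam * t) = exp (lam * t) ^ 2 := by rw [← exp_nat_mul]; ring_nf
  have hs1 : exp (lam * t) < 1 := exp_lt_one_iff.2 (mul_neg_of_neg_of_pos hlam_neg ht)
  rw [hsq, ha, hb]
  exact ⟨one_sub_mul_sq_add_mul_pos hp0 hpcold (by linarith) (exp_pos _) hs1,
    one_sub_mul_sq_add_mul_lt_one (hp0.trans_lt hpcold) hpcold hpe_half (exp_pos _)⟩
end
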